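/- For r ≥ 3 and a ≥ 0, the function ψ_r(a;·) is strictly monotone on each interval between consecutive zeroes of its derivative ψ_{r−1}(a;·). -/

import Mathlib

/-!
For `r ≥ 3` the derivative `ψ_{r-1}(a;·)` is continuous, so on an interval where it has no zero
it keeps one sign by the intermediate value theorem, and its primitive `ψ_r(a;·)` is strictly
monotone there. That `ψ_r(a;·)` is a primitive of the given `g` rests on uniqueness: two periodic
primitives of the same function differ by a constant, which the zero mean over the period
`4 + 2a > 0` forces to vanish.
-/

open MeasureTheory intervalIntegral Set

/-- essential sup norm on ℝ, as a real number -/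
noncomputable def nrm (f : ℝ → ℝ) : ℝ := (eLpNorm f ⊤ volume).toReal

/-- supremum norm on ℝ -/
noncomputable def supNorm (f : ℝ → ℝ) : ℝ := ⨆ t, |f t|

/-- ψ₁ on the base interval [0, a+2] -/
noncomputable def psi1base (a t : ℝ) : ℝ :=
  if t ≤ 1 then t - 1 else if t ≤ a + 1 then 0 else t - a - 1

/-- ψ₁(a;·): even (4+2a)-periodic extension of `psi1base a` -/
noncomputable def psi1 (a : ℝ) : ℝ → ℝ := fun t =>
  let T := 4 + 2 * a
  let s := t - T * ⌊t / T⌋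
  if s ≤ a + 2 then psi1base a s else psi1base a (T - s)

/-- ψ₂ on the base interval [0, a+2] -/
noncomputable def psi2base (a t : ℝ) : ℝ :=
  if t ≤ 1 then (t - 1) ^ 2 / 2 - 1 / 2
  else if t ≤ a + 1 then -(1 / 2)
  else (t - a - 1) ^ 2 / 2 - 1 / 2

/-- ψ₂(a;·): odd (4+2a)-periodic extension of `psi2base a` -/
noncomputable def psi2 (a : ℝ) : ℝ → ℝ := fun t =>
  let T := 4 + 2 * a
  let s := t - T * ⌊t / T⌋
  if s ≤ a + 2 then psi2base a s else -psi2base a (T - s)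

/-- `IsPsi a r f` : f is the (r-1)-th (4+2a)-periodic integral with zero mean
of ψ₁(a;·), i.e. f = ψ_r(a;·). -/
def IsPsi (a : ℝ) : ℕ → (ℝ → ℝ) → Prop
  | 0, _ => False
  | 1, f => f = psi1 a
  | (n + 2), f => ∃ g, IsPsi a (n + 1) g ∧
      (∀ s t : ℝ, f t - f s = ∫ u in s..t, g u) ∧
      (∫ t in (0:ℝ)..(4 + 2 * a), f t) = 0

/-- φ₀(t) = sgn (sin t) -/
noncomputable def phi0 (t : ℝ) : ℝ := Real.sign (Real.sin t)

/-- `IsPhi r f` : f is the Euler perfect spline φ_r, the r-th 2π-periodic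
integral with zero mean of φ₀. -/
noncomputable def IsPhi : ℕ → (ℝ → ℝ) → Prop
  | 0, f => f = phi0
  | (n + 1), f => ∃ g, IsPhi n g ∧
      (∀ s t : ℝ, f t - f s = ∫ u in s..t, g u) ∧
      (∫ t in (0:ℝ)..(2 * Real.pi), f t) = 0

/-- membership in L^r_{∞,∞}(ℝ): x^{(r-1)} locally absolutely continuous,
x and x^{(r)} essentially bounded. -/
def MemL (r : ℕ) (x : ℝ → ℝ) : Prop :=
  ContDiff ℝ (r - 1 : ℕ) x ∧
  (∀ s t : ℝ, iteratedDeriv (r - 1) x t - iteratedDeriv (r - 1) x s =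
      ∫ u in s..t, iteratedDeriv r x u) ∧
  MemLp x ⊤ volume ∧ MemLp (iteratedDeriv r x) ⊤ volume

/-- the spline Ψ_{a,b,λ}(t) = b · f(λ t), where f = ψ_r(a;·) -/
noncomputable def Psi (b lam : ℝ) (f : ℝ → ℝ) : ℝ → ℝ := fun t => b * f (lam * t)

lemma measurable_psi1base (a : ℝ) : Measurable (psi1base a) :=
  Measurable.ite measurableSet_Iic (by fun_prop)
    (Measurable.ite measurableSet_Iic measurable_const (by fun_prop))

lemma measurable_psi1 (a : ℝ) : Measurable (psi1 a) := by
  have hs : Measurable fun t : ℝ => t - (4 + 2 * a) * ⌊t / (4 + 2 * a)⌋ := by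
    measurability
  exact Measurable.ite (measurableSet_le hs measurable_const) ((measurable_psi1base a).comp hs)
    ((measurable_psi1base a).comp (measurable_const.sub hs))

lemma abs_psi1base_le_one {a x : ℝ} (hx₀ : 0 ≤ x) (hx : x ≤ a + 2) : |psi1base a x| ≤ 1 := by
  unfold psi1base
  split_ifs <;> rw [abs_le] <;> constructor <;> linarith

lemma abs_psi1_le_one {a : ℝ} (ha : 0 ≤ a) (t : ℝ) : |psi1 a t| ≤ 1 := by
  have hT : (0 : ℝ) < 4 + 2 * a := by linarith
  have hs₀ := Int.sub_floor_div_mul_nonneg t hT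
  have hsT := Int.sub_floor_div_mul_lt t hT
  simp only [psi1, mul_comm (4 + 2 * a)]
  split_ifs with h
  · exact abs_psi1base_le_one hs₀ h
  · exact abs_psi1base_le_one (by linarith) (by linarith)

lemma intervalIntegrable_psi1 {a : ℝ} (ha : 0 ≤ a) (s t : ℝ) :
    IntervalIntegrable (psi1 a) volume s t :=
  (intervalIntegrable_const (c := (1 : ℝ))).mono_fun' (measurable_psi1 a).aestronglyMeasurable
    (ae_of_all _ fun t => by simpa using abs_psi1_le_one ha t)

lemma IsPreconnected.forall_pos_or_forall_neg {X : Type*} [TopologicalSpace X] {s : Set X}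
    {g : X → ℝ} (hs : IsPreconnected s) (hg : ContinuousOn g s) (hne : ∀ x ∈ s, g x ≠ 0) :
    (∀ x ∈ s, 0 < g x) ∨ (∀ x ∈ s, g x < 0) := by
  by_contra! h
  obtain ⟨⟨x, hx, hgx⟩, y, hy, hgy⟩ := h
  obtain ⟨z, hz, hgz⟩ := hs.intermediate_value hx hy hg ⟨hgx, hgy⟩
  exact hne z hz hgz

lemma continuous_of_forall_sub_eq_integral {f g : ℝ → ℝ}
    (hg : ∀ s t, IntervalIntegrable g volume s t) (hfg : ∀ s t, f t - f s = ∫ u in s..t, g u) :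
    Continuous f := by
  have hf : f = fun t => f 0 + ∫ u in (0 : ℝ)..t, g u := by
    funext t
    linarith [hfg 0 t]
  rw [hf]
  exact continuous_const.add (continuous_primitive hg 0)

lemma eq_of_forall_sub_eq_of_integral_eq {u v : ℝ → ℝ} {T : ℝ} (hT : T ≠ 0)
    (huv : ∀ s t, u t - u s = v t - v s) (hv : IntervalIntegrable v volume 0 T)
    (hint : ∫ t in (0 : ℝ)..T, u t = ∫ t in (0 : ℝ)..T, v t) : u = v := by
  set C := u 0 - v 0
  have hu : u = fun t => v t + C := by
    funext t
    linarith [huv 0 t]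
  have hC : C * T = 0 := by
    rw [hu, integral_add hv intervalIntegrable_const, intervalIntegral.integral_const,
      smul_eq_mul] at hint
    linarith
  rw [hu, (mul_eq_zero.1 hC).resolve_right hT]
  simp

theorem strictMonoOn_or_strictAntiOn_of_forall_sub_eq_integral {f g : ℝ → ℝ} {c d : ℝ}
    (hg : ContinuousOn g (Icc c d)) (hfg : ∀ s t, f t - f s = ∫ u in s..t, g u)
    (hne : ∀ t ∈ Ioo c d, g t ≠ 0) :
    StrictMonoOn f (Icc c d) ∨ StrictAntiOn f (Icc c d) := by
  have hsub {s t} (hs : s ∈ Icc c d) (ht : t ∈ Icc c d) : Ioo s t ⊆ Ioo c d :=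
    Ioo_subset_Ioo hs.1 ht.2
  have hint {s t} (hs : s ∈ Icc c d) (ht : t ∈ Icc c d) : IntervalIntegrable g volume s t :=
    (hg.mono (uIcc_subset_Icc hs ht)).intervalIntegrable
  rcases isPreconnected_Ioo.forall_pos_or_forall_neg (hg.mono Ioo_subset_Icc_self) hne
    with hpos | hneg
  · refine Or.inl fun s hs t ht hst => ?_
    have := intervalIntegral_pos_of_pos_on (hint hs ht) (fun u hu => hpos u (hsub hs ht hu)) hst
    linarith [hfg s t]
  · refine Or.inr fun s hs t ht hst => ?_
    have := intervalIntegral_pos_of_pos_on (hint hs ht).neg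
      (fun u hu => neg_pos.2 (hneg u (hsub hs ht hu))) hst
    simp only [Pi.neg_apply, intervalIntegral.integral_neg] at this
    linarith [hfg s t]

namespace IsPsi

variable {a : ℝ}

lemma intervalIntegrable (ha : 0 ≤ a) {n : ℕ} {f : ℝ → ℝ} (hf : IsPsi a n f) (s t : ℝ) :
    IntervalIntegrable f volume s t := by
  induction n generalizing f s t with
  | zero => exact hf.elim
  | succ n ih =>
    cases n with
    | zero =>
      rw [show f = psi1 a from hf]
      exact intervalIntegrable_psi1 ha s t
    | succ m =>
      obtain ⟨g, hg, hfg, -⟩ := hf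
      exact (continuous_of_forall_sub_eq_integral (ih hg) hfg).intervalIntegrable s t

lemma continuous (ha : 0 ≤ a) {n : ℕ} {f : ℝ → ℝ} (hf : IsPsi a (n + 2) f) : Continuous f := by
  obtain ⟨g, hg, hfg, -⟩ := hf
  exact continuous_of_forall_sub_eq_integral (hg.intervalIntegrable ha) hfg

lemma unique (ha : 0 ≤ a) {n : ℕ} {u v : ℝ → ℝ} (hu : IsPsi a n u) (hv : IsPsi a n v) :
    u = v := by
  induction n generalizing u v with
  | zero => exact hu.elim
  | succ n ih =>
    cases n with
    | zero => exact hu.trans hv.symm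
    | succ m =>
      have hvi := hv.intervalIntegrable ha 0 (4 + 2 * a)
      obtain ⟨g, hg, hu, hu₀⟩ := hu
      obtain ⟨g', hg', hv, hv₀⟩ := hv
      obtain rfl := ih hg hg'
      refine eq_of_forall_sub_eq_of_integral_eq (by linarith) (fun s t => ?_) hvi
        (hu₀.trans hv₀.symm)
      rw [hu, hv]

end IsPsi

theorem stmt7_general (r : ℕ) (hr : 3 ≤ r) (a : ℝ) (ha : 0 ≤ a) (f g : ℝ → ℝ)
    (hf : IsPsi a r f) (hg : IsPsi a (r - 1) g)
    (c d : ℝ) (hmid : ∀ t ∈ Set.Ioo c d, g t ≠ 0) :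
    StrictMonoOn f (Set.Icc c d) ∨ StrictAntiOn f (Set.Icc c d) := by
  obtain ⟨n, rfl⟩ : ∃ n, r = n + 3 := ⟨r - 3, by omega⟩
  obtain ⟨g', hg', hfg, -⟩ := hf
  obtain rfl : g' = g := hg'.unique ha hg
  exact strictMonoOn_or_strictAntiOn_of_forall_sub_eq_integral
    (hg'.continuous ha).continuousOn hfg hmid

theorem stmt7 (r : ℕ) (hr : 3 ≤ r) (a : ℝ) (ha : 0 ≤ a) (f g : ℝ → ℝ)
    (hf : IsPsi a r f) (hg : IsPsi a (r - 1) g)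
    (c d : ℝ) (hcd : c < d) (hc : g c = 0) (hd : g d = 0)
    (hmid : ∀ t ∈ Set.Ioo c d, g t ≠ 0) :
    StrictMonoOn f (Set.Icc c d) ∨ StrictAntiOn f (Set.Icc c d) :=
  stmt7_general r hr a ha f g hf hg c d hmid
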